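/- arXiv:1203.1296 — 5 statements merged into one kernel-verified Lean document; each statement's English description precedes it below -/
import Mathlib

section
/- Suppose nonnegative reals (tᵢ)_{i≥2} and (pⱼ)_{j≥4} satisfy Σ_{i≥2}(9-3i)tᵢ = 9 + 3p₄ + Σ_{j≥5}(3j-9)pⱼ and 3p₄ + Σ_{j≥5} j·pⱼ ≥ 2t₂ - Σ_{i≥3}(i - 3/2)tᵢ - 1. Then t₂ + (3/2)t₃ ≥ 8 + Σ_{i≥4}(2i - 15/2)tᵢ. -/
/-! Since `j ≤ 3j - 9` for `j ≥ 5` and `pⱼ ≥ 0`, the left side of the bound on `t₂` is at most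
`3p₄ + ∑ (3j - 9)pⱼ`, which Melchior's identity turns into `∑ (9 - 3i)tᵢ - 9`; comparing the
coefficients of the `tᵢ` gives the claim. Splitting `t₂` and `t₃` off the sums needs `t₂, t₃ ≥ 0`
when `n` is too small for them to occur. -/

open Finset

theorem Finset.sum_Icc_le_add_sum_Icc_succ {M : Type*} [AddCommMonoid M] [PartialOrder M]
    [IsOrderedAddMonoid M] (f : ℕ → M) {a : ℕ} (n : ℕ) (ha : 0 ≤ f a) :
    ∑ i ∈ Icc a n, f i ≤ f a + ∑ i ∈ Icc (a + 1) n, f i := by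
  rcases le_or_gt a n with han | hna
  · rw [← insert_Icc_succ_left_eq_Icc han, Order.succ_eq_add_one, sum_insert (by simp)]
  · simpa [Icc_eq_empty_of_lt hna, Icc_eq_empty_of_lt (hna.trans (Nat.lt_succ_self a))] using ha

theorem sum_Icc_five_mul_le_sum_three_mul_sub_nine (n : ℕ) (p : ℕ → ℝ) (hp : ∀ j, 0 ≤ p j) :
    ∑ j ∈ Icc 5 n, (j : ℝ) * p j ≤ ∑ j ∈ Icc 5 n, (3 * (j : ℝ) - 9) * p j := by
  refine sum_le_sum fun j hj => mul_le_mul_of_nonneg_right ?_ (hp j)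
  have : (5 : ℝ) ≤ j := by exact_mod_cast (mem_Icc.mp hj).1
  linarith

theorem stmt5 (n : ℕ) (t p : ℕ → ℝ)
    (ht : ∀ i, 0 ≤ t i) (hp : ∀ j, 0 ≤ p j)
    (hmel : ∑ i ∈ Finset.Icc 2 n, (9 - 3 * (i : ℝ)) * t i
      = 9 + 3 * p 4 + ∑ j ∈ Finset.Icc 5 n, (3 * (j : ℝ) - 9) * p j)
    (hbound : 3 * p 4 + ∑ j ∈ Finset.Icc 5 n, (j : ℝ) * p j
      ≥ 2 * t 2 - (∑ i ∈ Finset.Icc 3 n, ((i : ℝ) - 3 / 2) * t i) - 1) :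
    t 2 + (3 / 2) * t 3 ≥ 8 + ∑ i ∈ Finset.Icc 4 n, (2 * (i : ℝ) - 15 / 2) * t i := by
  set f : ℕ → ℝ := fun i => (9 - 3 * (i : ℝ)) * t i
  set g : ℕ → ℝ := fun i => ((i : ℝ) - 3 / 2) * t i
  have hf : ∑ i ∈ Icc 2 n, f i ≤ 3 * t 2 + ∑ i ∈ Icc 4 n, f i := by
    have h2 : 0 ≤ f 2 := by simp only [f]; norm_num; exact ht 2
    have h3 : f 3 = 0 := by simp only [f]; norm_num
    calc ∑ i ∈ Icc 2 n, f i ≤ f 2 + ∑ i ∈ Icc 3 n, f i := sum_Icc_le_add_sum_Icc_succ f n h2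
      _ ≤ f 2 + (f 3 + ∑ i ∈ Icc 4 n, f i) :=
          by gcongr; exact sum_Icc_le_add_sum_Icc_succ f n h3.ge
      _ = 3 * t 2 + ∑ i ∈ Icc 4 n, f i := by rw [h3]; simp only [f]; ring
  have hg : ∑ i ∈ Icc 3 n, g i ≤ 3 / 2 * t 3 + ∑ i ∈ Icc 4 n, g i := by
    have h3 : 0 ≤ g 3 := by simp only [g]; linarith [ht 3]
    calc ∑ i ∈ Icc 3 n, g i ≤ g 3 + ∑ i ∈ Icc 4 n, g i := sum_Icc_le_add_sum_Icc_succ g n h3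
      _ = 3 / 2 * t 3 + ∑ i ∈ Icc 4 n, g i := by simp only [g]; ring
  have hfg : ∑ i ∈ Icc 4 n, (2 * (i : ℝ) - 15 / 2) * t i
      = -(∑ i ∈ Icc 4 n, f i + ∑ i ∈ Icc 4 n, g i) := by
    rw [← sum_add_distrib, ← sum_neg_distrib]
    exact sum_congr rfl fun i _ => by simp only [f, g]; ring
  linarith [sum_Icc_five_mul_le_sum_three_mul_sub_nine n p hp]
end

section
/- For integers n ≥ 2 and i ≥ 2, the interval (i(n-i+1) + C(i-1,2), (i+1)(n-i)) contains at least one integer if and only if n ≥ C(i+1,2) + 3. -/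
theorem Int.exists_between_iff_add_two_le {a b : ℤ} : (∃ x : ℤ, a < x ∧ x < b) ↔ a + 2 ≤ b :=
  ⟨fun ⟨_, hax, hxb⟩ => by omega, fun h => ⟨a + 1, by omega, by omega⟩⟩

/-- No parity case split is needed: the two numerators differ by the even number `2 * (2 * i - 1)`. -/
theorem Int.mul_add_one_ediv_two (i : ℤ) :
    i * (i + 1) / 2 = (i - 1) * (i - 2) / 2 + (2 * i - 1) := by
  rw [← Int.add_mul_ediv_left _ _ two_ne_zero]
  ring_nf

theorem stmt7_general (n i : ℤ) :
    (∃ x : ℤ, i * (n - i + 1) + (i - 1) * (i - 2) / 2 < x ∧ x < (i + 1) * (n - i))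
      ↔ n ≥ i * (i + 1) / 2 + 3 := by
  rw [Int.exists_between_iff_add_two_le, Int.mul_add_one_ediv_two]
  constructor <;> intro h <;> linarith

theorem stmt7 (n i : ℤ) (hn : 2 ≤ n) (hi : 2 ≤ i) :
    (∃ x : ℤ, i * (n - i + 1) + (i - 1) * (i - 2) / 2 < x ∧ x < (i + 1) * (n - i))
      ↔ n ≥ i * (i + 1) / 2 + 3 :=
  stmt7_general n i
end

section
/- Let n, m be integers with 2 ≤ m ≤ n-1, and let f and m satisfy m(n-m+1) ≤ f (lower Arnold bound) and f ≤ m(n-m+1) + C(n-m,2) (upper Arnold bound). If f lies strictly between aᵢ = i(n-i+1) + C(i-1,2) and bᵢ = (i+1)(n-i) for some i, then m ≤ i. -/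
theorem stmt9 (n m i f : ℤ) (hm2 : 2 ≤ m) (hmn : m ≤ n - 1)
    (hlow : m * (n - m + 1) ≤ f)
    (hhigh : f ≤ m * (n - m + 1) + (n - m) * (n - m - 1) / 2)
    (ha : i * (n - i + 1) + (i - 1) * (i - 2) / 2 < f)
    (hb : f < (i + 1) * (n - i)) :
    m ≤ i := by
  by_contra hcon
  push_neg at hcon
  have hi1 : i + 1 ≤ m := hcon
  have hA : (2 : ℤ) ∣ (n - m) * (n - m - 1) := by
    rcases Int.even_or_odd (n - m) with h | h
    · exact Dvd.dvd.mul_right h.two_dvd _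
    · obtain ⟨k, hk⟩ := h
      exact Dvd.dvd.mul_left ⟨k, by omega⟩ _
  have hB : (2 : ℤ) ∣ (i - 1) * (i - 2) := by
    rcases Int.even_or_odd (i - 1) with h | h
    · exact Dvd.dvd.mul_right h.two_dvd _
    · obtain ⟨k, hk⟩ := h
      exact Dvd.dvd.mul_left ⟨k, by omega⟩ _
  have hA' : (n - m) * (n - m - 1) / 2 * 2 = (n - m) * (n - m - 1) :=
    Int.ediv_mul_cancel hA
  have hB' : (i - 1) * (i - 2) / 2 * 2 = (i - 1) * (i - 2) :=
    Int.ediv_mul_cancel hB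
  rcases le_or_gt m (n - i) with hc | hc
  · -- first Arnold inequality
    have key : (i + 1) * (n - i) ≤ m * (n - m + 1) := by
      nlinarith [mul_nonneg (by omega : (0:ℤ) ≤ m - i - 1) (by omega : (0:ℤ) ≤ n - i - m)]
    linarith
  · -- second Arnold inequality
    have h2f : 2 * f ≤ 2 * (m * (n - m + 1)) + (n - m) * (n - m - 1) := by
      nlinarith [hhigh, hA']
    have h2f' : 2 * (i * (n - i + 1)) + (i - 1) * (i - 2) < 2 * f := by
      nlinarith [ha, hB']
    have key : 2 * (m * (n - m + 1)) + (n - m) * (n - m - 1)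
        ≤ 2 * (i * (n - i + 1)) + (i - 1) * (i - 2) := by
      nlinarith [mul_nonneg (by omega : (0:ℤ) ≤ i - 1 - (n - m))
        (by omega : (0:ℤ) ≤ n + m - i - 2)]
    linarith
end

section
/- Let n ≥ 2 and 12 ≤ m < n - 2 be integers, and let (tᵢ)_{2 ≤ i ≤ m} be nonnegative reals with Σᵢ i(i-1)tᵢ = n(n-1) and t₂ + (3/2)t₃ ≥ 8 + Σ_{i≥4}(2i - 15/2)tᵢ. Then f := 1 + Σᵢ (i-1)tᵢ satisfies f ≥ ((3m - 17/2)(n² - n) + 9m² - 21m + 1)/(m² + 3m - 15). -/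
/-!
Multiply the Hirzebruch-type inequality by `b = (m - 1)(m - 2)` and add it to
`(3m - 17/2) · ∑ i(i-1) tᵢ = (3m - 17/2) · n(n-1)`. With `K = m² + 3m - 15`, the constant
`9m² - 21m + 1` equals `K + 8b`, so it suffices that every coefficient of `tᵢ` on the
`f`-side dominates: the `t₂` coefficients agree exactly, the `t₃` one has slack
`(m - 3)(m - 12)/2 ≥ 0`, and for `4 ≤ i ≤ m` the difference factors as
`(m - i)((3m - 17/2) i + (39 - 17m)/2) ≥ 0`.
-/

open Finset

lemma sum_Icc_eq_add_sum_Icc_succ {M : Type*} [AddCommMonoid M] (f : ℕ → M) {a b : ℕ}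
    (h : a ≤ b) : ∑ i ∈ Icc a b, f i = f a + ∑ i ∈ Icc (a + 1) b, f i := by
  rw [← add_sum_Ioc_eq_sum_Icc h, Icc_add_one_left_eq_Ioc]

lemma tail_coeff_le {m x : ℝ} (hm : 5 ≤ m) (hx : 4 ≤ x) (hxm : x ≤ m) :
    (3 * m - 17 / 2) * (x * (x - 1)) - (m ^ 2 - 3 * m + 2) * (2 * x - 15 / 2)
      ≤ (m ^ 2 + 3 * m - 15) * (x - 1) := by
  have hfactor : 0 ≤ (m - x) * ((3 * m - 17 / 2) * x + (39 - 17 * m) / 2) :=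
    mul_nonneg (by linarith) (by nlinarith)
  linear_combination hfactor

lemma tail_sum_le {m : ℕ} (hm : 5 ≤ m) {t : ℕ → ℝ} (ht : ∀ i, 0 ≤ t i) :
    (3 * (m : ℝ) - 17 / 2) * ∑ i ∈ Icc 4 m, (i : ℝ) * (i - 1) * t i
      - ((m : ℝ) ^ 2 - 3 * m + 2) * ∑ i ∈ Icc 4 m, (2 * (i : ℝ) - 15 / 2) * t i
      ≤ ((m : ℝ) ^ 2 + 3 * m - 15) * ∑ i ∈ Icc 4 m, ((i : ℝ) - 1) * t i := by
  rw [mul_sum, mul_sum, mul_sum, ← sum_sub_distrib]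
  refine sum_le_sum fun i hi => ?_
  obtain ⟨h4i, him⟩ := mem_Icc.mp hi
  have hcoeff := tail_coeff_le (m := m) (by exact_mod_cast hm)
    (by exact_mod_cast h4i : (4 : ℝ) ≤ i) (by exact_mod_cast him)
  linear_combination mul_le_mul_of_nonneg_right hcoeff (ht i)

theorem stmt14_general (n m : ℕ) (hm : 12 ≤ m)
    (t : ℕ → ℝ) (ht : ∀ i, 0 ≤ t i)
    (hpairs : ∑ i ∈ Finset.Icc 2 m, (i : ℝ) * ((i : ℝ) - 1) * t i = n * ((n : ℝ) - 1))
    (hhirz : t 2 + (3 / 2) * t 3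
      ≥ 8 + ∑ i ∈ Finset.Icc 4 m, (2 * (i : ℝ) - 15 / 2) * t i) :
    1 + ∑ i ∈ Finset.Icc 2 m, ((i : ℝ) - 1) * t i
      ≥ ((3 * (m : ℝ) - 17 / 2) * ((n : ℝ) ^ 2 - n) + 9 * (m : ℝ) ^ 2 - 21 * m + 1)
          / ((m : ℝ) ^ 2 + 3 * m - 15) := by
  have hm' : (12 : ℝ) ≤ m := by exact_mod_cast hm
  have hK : (0 : ℝ) < m ^ 2 + 3 * m - 15 := by nlinarith
  have htail := tail_sum_le (m := m) (by omega) ht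
  have hb : (0 : ℝ) ≤ m ^ 2 - 3 * m + 2 := by nlinarith
  have hhirz' := mul_le_mul_of_nonneg_left hhirz hb
  have ht3 : 0 ≤ ((m : ℝ) - 3) * (m - 12) * t 3 :=
    mul_nonneg (mul_nonneg (by linarith) (by linarith)) (ht 3)
  rw [sum_Icc_eq_add_sum_Icc_succ _ (by omega), sum_Icc_eq_add_sum_Icc_succ _ (by omega)]
    at hpairs ⊢
  rw [ge_iff_le, div_le_iff₀ hK]
  push_cast at hpairs ⊢
  linear_combination htail + hhirz' + ht3 / 2 - (3 * (m : ℝ) - 17 / 2) * hpairs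

theorem stmt14 (n m : ℕ) (hn : 2 ≤ n) (hm : 12 ≤ m) (hmn : m + 2 < n)
    (t : ℕ → ℝ) (ht : ∀ i, 0 ≤ t i)
    (hpairs : ∑ i ∈ Finset.Icc 2 m, (i : ℝ) * ((i : ℝ) - 1) * t i = n * ((n : ℝ) - 1))
    (hhirz : t 2 + (3 / 2) * t 3
      ≥ 8 + ∑ i ∈ Finset.Icc 4 m, (2 * (i : ℝ) - 15 / 2) * t i) :
    1 + ∑ i ∈ Finset.Icc 2 m, ((i : ℝ) - 1) * t i
      ≥ ((3 * (m : ℝ) - 17 / 2) * ((n : ℝ) ^ 2 - n) + 9 * (m : ℝ) ^ 2 - 21 * m + 1)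
          / ((m : ℝ) ^ 2 + 3 * m - 15) :=
  stmt14_general n m hm t ht hpairs hhirz
end

section
/- Let n ≥ 2 and 5 ≤ m < n - 2 be integers, and let (tᵢ)_{2 ≤ i ≤ m} be nonnegative reals with Σᵢ i(i-1)tᵢ = n(n-1) and t₂ + (3/4)t₃ ≥ n + Σ_{i≥5}(2i - 9)tᵢ. Then f := 1 + Σᵢ (i-1)tᵢ satisfies f ≥ ((3m - 10)n² + (m² - 6m + 12)n)/(m² + 3m - 18) + 1. -/
/-!
Put `A = m² + 3m - 18` and `N = (3m - 10)n² + (m² - 6m + 12)n`. Since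
`N = (3m - 10)·n(n - 1) + (m - 1)(m - 2)·n`, the pair count bounds the first term and the
Hirzebruch-type inequality, scaled by `(m - 1)(m - 2)`, bounds the second. What remains is
the coefficientwise inequality `(3m - 10)i(i - 1) + (m - 1)(m - 2)wᵢ ≤ A(i - 1)` for the
Hirzebruch weights `w₂ = 1`, `w₃ = 3/4`, `w₄ = 0`, `wᵢ = 9 - 2i`: it is an equality at `i = 2`
and at `i = m`, and for `5 ≤ i ≤ m` the difference factors as `(m - i)((3m - 10)i - 10m + 24)`.
-/

open Finset

lemma sum_Icc_two_eq_add_sum_Icc_five {M : Type*} [AddCommMonoid M] (f : ℕ → M) {m : ℕ}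
    (hm : 4 ≤ m) : ∑ i ∈ Icc 2 m, f i = f 2 + f 3 + f 4 + ∑ i ∈ Icc 5 m, f i := by
  have hsplit : Icc 2 m = insert 2 (insert 3 (insert 4 (Icc 5 m))) := by
    ext x
    simp only [mem_Icc, mem_insert]
    omega
  rw [hsplit, sum_insert (by simp), sum_insert (by simp), sum_insert (by simp), add_assoc,
    add_assoc]

lemma hirzebruch_coeff_le {i m : ℕ} (hi : 5 ≤ i) (him : i ≤ m) :
    (3 * (m : ℝ) - 10) * (i * (i - 1)) ≤
      ((m : ℝ) - 1) * (m - 2) * (2 * i - 9) + ((m : ℝ) ^ 2 + 3 * m - 18) * (i - 1) := by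
  have hfactor : ((m : ℝ) - 1) * (m - 2) * (2 * i - 9) + ((m : ℝ) ^ 2 + 3 * m - 18) * (i - 1)
      - (3 * (m : ℝ) - 10) * (i * (i - 1)) = (m - i) * ((3 * m - 10) * i - 10 * m + 24) := by
    ring
  rcases him.eq_or_lt with rfl | hlt
  · nlinarith
  · -- for `i < m` we have `m ≥ 6`, which makes the second factor positive
    have hi' : (5 : ℝ) ≤ i := by exact_mod_cast hi
    have hlt' : (i : ℝ) + 1 ≤ m := by exact_mod_cast hlt
    have hsecond : 0 ≤ (3 * (m : ℝ) - 10) * i - 10 * m + 24 := by nlinarith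
    nlinarith [mul_nonneg (by linarith : (0 : ℝ) ≤ m - i) hsecond]

lemma hirzebruch_tail_le {m : ℕ} (t : ℕ → ℝ) (ht : ∀ i, 0 ≤ t i) :
    (3 * (m : ℝ) - 10) * ∑ i ∈ Icc 5 m, (i : ℝ) * (i - 1) * t i ≤
      ((m : ℝ) - 1) * (m - 2) * ∑ i ∈ Icc 5 m, (2 * (i : ℝ) - 9) * t i
        + ((m : ℝ) ^ 2 + 3 * m - 18) * ∑ i ∈ Icc 5 m, ((i : ℝ) - 1) * t i := by
  simp only [mul_sum, ← sum_add_distrib]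
  refine sum_le_sum fun i hi => ?_
  obtain ⟨hi5, him⟩ := mem_Icc.mp hi
  have := mul_le_mul_of_nonneg_right (hirzebruch_coeff_le hi5 him) (ht i)
  linarith

theorem stmt16_general (n m : ℕ) (hm : 5 ≤ m)
    (t : ℕ → ℝ) (ht : ∀ i, 0 ≤ t i)
    (hpairs : ∑ i ∈ Finset.Icc 2 m, (i : ℝ) * ((i : ℝ) - 1) * t i = n * ((n : ℝ) - 1))
    (hhirz : t 2 + (3 / 4) * t 3
      ≥ n + ∑ i ∈ Finset.Icc 5 m, (2 * (i : ℝ) - 9) * t i) :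
    1 + ∑ i ∈ Finset.Icc 2 m, ((i : ℝ) - 1) * t i
      ≥ ((3 * (m : ℝ) - 10) * (n : ℝ) ^ 2 + ((m : ℝ) ^ 2 - 6 * m + 12) * n)
          / ((m : ℝ) ^ 2 + 3 * m - 18) + 1 := by
  have hm' : (5 : ℝ) ≤ m := by exact_mod_cast hm
  have hA : 0 < (m : ℝ) ^ 2 + 3 * m - 18 := by nlinarith
  have htail := hirzebruch_tail_le (m := m) t ht
  have hc3 : 0 ≤ (5 * (m : ℝ) ^ 2 - 39 * m + 90) / 4 * t 3 := mul_nonneg (by nlinarith) (ht 3)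
  have hc4 : 0 ≤ 3 * ((m : ℝ) ^ 2 - 9 * m + 22) * t 4 := mul_nonneg (by nlinarith) (ht 4)
  have hm12 : 0 ≤ ((m : ℝ) - 1) * (m - 2) := by nlinarith
  rw [sum_Icc_two_eq_add_sum_Icc_five _ (by omega)] at hpairs ⊢
  rw [ge_iff_le, add_comm, add_le_add_iff_left, div_le_iff₀ hA]
  linear_combination (10 - 3 * (m : ℝ)) * hpairs + ((m : ℝ) - 1) * (m - 2) * hhirz
    + htail + hc3 + hc4

theorem stmt16 (n m : ℕ) (hn : 2 ≤ n) (hm : 5 ≤ m) (hmn : m + 2 < n)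
    (t : ℕ → ℝ) (ht : ∀ i, 0 ≤ t i)
    (hpairs : ∑ i ∈ Finset.Icc 2 m, (i : ℝ) * ((i : ℝ) - 1) * t i = n * ((n : ℝ) - 1))
    (hhirz : t 2 + (3 / 4) * t 3
      ≥ n + ∑ i ∈ Finset.Icc 5 m, (2 * (i : ℝ) - 9) * t i) :
    1 + ∑ i ∈ Finset.Icc 2 m, ((i : ℝ) - 1) * t i
      ≥ ((3 * (m : ℝ) - 10) * (n : ℝ) ^ 2 + ((m : ℝ) ^ 2 - 6 * m + 12) * n)
          / ((m : ℝ) ^ 2 + 3 * m - 18) + 1 :=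
  stmt16_general n m hm t ht hpairs hhirz
end
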